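/- The function x ↦ h((1 − √x)/2) is concave on the interval [0,1], where h is the binary entropy function h(t) = −t·log₂ t − (1−t)·log₂(1−t) (with 0·log₂ 0 = 0). -/

import Mathlib

/-- The binary entropy function `h(t) = −t·log₂ t − (1−t)·log₂(1−t)`
(with the convention `0·log₂ 0 = 0`). -/
noncomputable def binEnt (t : ℝ) : ℝ :=
  -t * Real.logb 2 t - (1 - t) * Real.logb 2 (1 - t)

/-!
With `s = √x` and `t = (1 - s)/2`, the chain rule gives
`d/dx h((1 - √x)/2) = -(log (1 + s) - log (1 - s)) / (4 s log 2)`.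
Since `log (1 + s) - log (1 - s) = 2 ∑ s^(2k+1)/(2k+1)`, the quotient by `s` is a power series
in `s²` with positive coefficients, hence increasing on `(0, 1)`; so the derivative is
antitone and the function is concave.
-/

open Real Set

lemma binEnt_eq_binEntropy_div_log_two : binEnt = fun t => binEntropy t / log 2 := by
  funext t
  simp only [binEnt, binEntropy, logb, log_inv]
  ring

lemma continuous_binEnt : Continuous binEnt := by
  rw [binEnt_eq_binEntropy_div_log_two]
  fun_prop

lemma hasDerivAt_binEnt {t : ℝ} (h₀ : t ≠ 0) (h₁ : t ≠ 1) :
    HasDerivAt binEnt ((log (1 - t) - log t) / log 2) t := by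
  rw [binEnt_eq_binEntropy_div_log_two]
  exact (hasDerivAt_binEntropy h₀ h₁).div_const _

lemma hasSum_log_one_add_sub_log_one_sub_div {s : ℝ} (h₀ : s ≠ 0) (h : |s| < 1) :
    HasSum (fun k : ℕ => 2 * (1 / (2 * k + 1)) * s ^ (2 * k))
      ((log (1 + s) - log (1 - s)) / s) := by
  convert (hasSum_log_sub_log_of_abs_lt_one h).div_const s using 1
  · rfl
  · funext k
    rw [pow_succ, ← mul_assoc, mul_div_cancel_right₀ _ h₀]

lemma monotoneOn_log_one_add_sub_log_one_sub_div :
    MonotoneOn (fun s => (log (1 + s) - log (1 - s)) / s) (Ioo 0 1) := by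
  intro a ⟨ha₀, ha₁⟩ b ⟨hb₀, hb₁⟩ hab
  refine hasSum_le (fun k => ?_)
    (hasSum_log_one_add_sub_log_one_sub_div ha₀.ne' (by rwa [abs_of_pos ha₀]))
    (hasSum_log_one_add_sub_log_one_sub_div hb₀.ne' (by rwa [abs_of_pos hb₀]))
  gcongr

lemma sqrt_mem_Ioo_zero_one {x : ℝ} (hx : x ∈ Ioo 0 1) : √x ∈ Ioo 0 1 :=
  ⟨sqrt_pos.2 hx.1, (sqrt_lt' one_pos).2 (by rw [one_pow]; exact hx.2)⟩

lemma hasDerivAt_binEnt_one_sub_sqrt_div_two {x : ℝ} (hx : x ∈ Ioo 0 1) :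
    HasDerivAt (fun x => binEnt ((1 - √x) / 2))
      (-((log (1 + √x) - log (1 - √x)) / √x) / (4 * log 2)) x := by
  obtain ⟨hs₀, hs₁⟩ := sqrt_mem_Ioo_zero_one hx
  have hsqrt := ((hasDerivAt_sqrt hx.1.ne').const_sub 1).div_const 2
  refine ((hasDerivAt_binEnt (by linarith) (by linarith)).comp x hsqrt).congr_deriv ?_
  rw [show 1 - (1 - √x) / 2 = (1 + √x) / 2 by ring, log_div (by linarith) two_ne_zero,
    log_div (by linarith) two_ne_zero]
  field_simp
  ring

/-- The function `x ↦ h((1 − √x)/2)` is concave on `[0,1]`. -/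
theorem concaveOn_binEnt_one_sub_sqrt_div_two :
    ConcaveOn ℝ (Set.Icc (0 : ℝ) 1) (fun x => binEnt ((1 - Real.sqrt x) / 2)) := by
  refine AntitoneOn.concaveOn_of_deriv (convex_Icc 0 1)
    (continuous_binEnt.comp (by fun_prop)).continuousOn ?_ ?_ <;> rw [interior_Icc]
  · exact fun x hx =>
      (hasDerivAt_binEnt_one_sub_sqrt_div_two hx).differentiableAt.differentiableWithinAt
  · intro x hx y hy hxy
    rw [(hasDerivAt_binEnt_one_sub_sqrt_div_two hx).deriv,
      (hasDerivAt_binEnt_one_sub_sqrt_div_two hy).deriv]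
    have hlog₂ := log_pos one_lt_two
    exact div_le_div_of_nonneg_right (neg_le_neg <| monotoneOn_log_one_add_sub_log_one_sub_div
      (sqrt_mem_Ioo_zero_one hx) (sqrt_mem_Ioo_zero_one hy) (sqrt_le_sqrt hxy)) (by positivity)
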